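/- Every sub-process of a well-typed program has an edge-free session dependency graph. In particular, every well-typed program is transparent. -/

import Mathlib

namespace Sess

/- Session types `α ::= ?(θ).α | !(θ).α | &{l_i:α_i} | ⊕{l_i:α_i} | end`,
with payloads `θ` a basic sort, a service sort, or a session type
(delegation).  Branching and selection are `n`-ary, labels are `Fin n`. -/
mutual
  inductive SType : Type where
    | recv : Payload → SType → SType
    | send : Payload → SType → SType
    | branch : (n : ℕ) → (Fin n → SType) → SType
    | select : (n : ℕ) → (Fin n → SType) → SType
    | done : SType
  inductive Payload : Type where
    | basicN : Payload
    | basicB : Payload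
    | serv : SType → Payload
    | sess : SType → Payload
end

/-- Duality: swaps input/output and branching/selection, pointwise. -/
def SType.dual : SType → SType
  | .recv θ α => .send θ α.dual
  | .send θ α => .recv θ α.dual
  | .branch n ts => .select n (fun i => (ts i).dual)
  | .select n ts => .branch n (fun i => (ts i).dual)
  | .done => .done

/-- First-order values: basic values and service names. -/
inductive Val : Type where
  | vnat : ℕ → Val
  | vbool : Bool → Val
  | vname : ℕ → Val

/-- Expressions: literals and (value) variables. -/
inductive Expr : Type where
  | lit : Val → Expr
  | evar : ℕ → Expr

/-- Evaluation of (closed) expressions. -/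
def Expr.eval : Expr → Option Val
  | .lit v => some v
  | .evar _ => none

/- Processes of the session π-calculus.  Session channels, service names and
variables are natural numbers; branching is `n`-ary with labels `Fin n` and
`sel k j P` selects the `j`-th label. -/
inductive Proc : Type where
  | nil : Proc
  | par : Proc → Proc → Proc
  | nu : ℕ → Proc → Proc                -- (νk)P, session restriction
  | serv : ℕ → ℕ → Proc → Proc          -- a(k).P
  | rserv : ℕ → ℕ → Proc → Proc         -- !a(k).P
  | req : ℕ → ℕ → Proc → Proc           -- ā(k).P
  | inp : ℕ → ℕ → Proc → Proc           -- k?(x).P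
  | out : ℕ → Expr → Proc → Proc        -- k!⟨e⟩.P
  | inS : ℕ → ℕ → Proc → Proc           -- k?((k')).P
  | outS : ℕ → ℕ → Proc → Proc          -- k!⟨⟨k'⟩⟩.P
  | branch : ℕ → (n : ℕ) → (Fin n → Proc) → Proc
  | sel : ℕ → ℕ → Proc → Proc
  | cond : Expr → Proc → Proc → Proc

/-- Free session channels of a process. -/
def fsc : Proc → Finset ℕ
  | .nil => ∅
  | .par P Q => fsc P ∪ fsc Q
  | .nu k P => (fsc P).erase k
  | .serv _ k P => (fsc P).erase k
  | .rserv _ k P => (fsc P).erase k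
  | .req _ k P => (fsc P).erase k
  | .inp k _ P => insert k (fsc P)
  | .out k _ P => insert k (fsc P)
  | .inS k k' P => insert k ((fsc P).erase k')
  | .outS k k' P => insert k (insert k' (fsc P))
  | .branch k n Ps => insert k (Finset.univ.biUnion fun i : Fin n => fsc (Ps i))
  | .sel k _ P => insert k (fsc P)
  | .cond _ P Q => fsc P ∪ fsc Q

/-- All session channels occurring in a process (free or bound). -/
def chans : Proc → Finset ℕ
  | .nil => ∅
  | .par P Q => chans P ∪ chans Q
  | .nu k P => insert k (chans P)
  | .serv _ k P => insert k (chans P)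
  | .rserv _ k P => insert k (chans P)
  | .req _ k P => insert k (chans P)
  | .inp k _ P => insert k (chans P)
  | .out k _ P => insert k (chans P)
  | .inS k k' P => insert k (insert k' (chans P))
  | .outS k k' P => insert k (insert k' (chans P))
  | .branch k n Ps => insert k (Finset.univ.biUnion fun i : Fin n => chans (Ps i))
  | .sel k _ P => insert k (chans P)
  | .cond _ P Q => chans P ∪ chans Q

/-- Renaming of session channels (applied also under binders; used only with
fresh targets, for α-conversion). -/
def srename (f : ℕ → ℕ) : Proc → Proc
  | .nil => .nil
  | .par P Q => .par (srename f P) (srename f Q)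
  | .nu k P => .nu (f k) (srename f P)
  | .serv a k P => .serv a (f k) (srename f P)
  | .rserv a k P => .rserv a (f k) (srename f P)
  | .req a k P => .req a (f k) (srename f P)
  | .inp k x P => .inp (f k) x (srename f P)
  | .out k e P => .out (f k) e (srename f P)
  | .inS k k' P => .inS (f k) (f k') (srename f P)
  | .outS k k' P => .outS (f k) (f k') (srename f P)
  | .branch k n Ps => .branch (f k) n (fun i => srename f (Ps i))
  | .sel k j P => .sel (f k) j (srename f P)
  | .cond e P Q => .cond e (srename f P) (srename f Q)

/-- Substitution of a value for a variable in an expression. -/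
def Expr.substV (x : ℕ) (v : Val) : Expr → Expr
  | .lit w => .lit w
  | .evar y => if y = x then .lit v else .evar y

/-- Substitution in service-name position. -/
def substName (x : ℕ) (v : Val) (a : ℕ) : ℕ :=
  match v with
  | .vname b => if a = x then b else a
  | _ => a

/-- Substitution of a value for a variable in a process. -/
def Proc.substV (x : ℕ) (v : Val) : Proc → Proc
  | .nil => .nil
  | .par P Q => .par (P.substV x v) (Q.substV x v)
  | .nu k P => .nu k (P.substV x v)
  | .serv a k P => .serv (substName x v a) k (P.substV x v)
  | .rserv a k P => .rserv (substName x v a) k (P.substV x v)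
  | .req a k P => .req (substName x v a) k (P.substV x v)
  | .inp k y P => if y = x then .inp k y P else .inp k y (P.substV x v)
  | .out k e P => .out k (e.substV x v) (P.substV x v)
  | .inS k k' P => .inS k k' (P.substV x v)
  | .outS k k' P => .outS k k' (P.substV x v)
  | .branch k n Ps => .branch k n (fun i => (Ps i).substV x v)
  | .sel k j P => .sel k j (P.substV x v)
  | .cond e P Q => .cond (e.substV x v) (P.substV x v) (Q.substV x v)

/-- Structural congruence. -/
inductive SCong : Proc → Proc → Prop where
  | refl (P) : SCong P P
  | symm : SCong P Q → SCong Q P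
  | trans : SCong P Q → SCong Q R → SCong P R
  | parComm (P Q) : SCong (.par P Q) (.par Q P)
  | parAssoc (P Q R) : SCong (.par P (.par Q R)) (.par (.par P Q) R)
  | parNil (P) : SCong (.par P .nil) P
  | nuNil (k) : SCong (.nu k .nil) .nil
  | scope (P Q : Proc) (k : ℕ) : k ∉ fsc P →
      SCong (.par P (.nu k Q)) (.nu k (.par P Q))
  | alpha (P : Proc) (k k' : ℕ) : k' ∉ chans P →
      SCong (.nu k P) (.nu k' (srename (fun c => if c = k then k' else c) P))
  | parCong : SCong P P' → SCong Q Q' → SCong (.par P Q) (.par P' Q')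
  | nuCong (k) : SCong P P' → SCong (.nu k P) (.nu k P')
  | servCong (a k) : SCong P P' → SCong (.serv a k P) (.serv a k P')
  | rservCong (a k) : SCong P P' → SCong (.rserv a k P) (.rserv a k P')
  | reqCong (a k) : SCong P P' → SCong (.req a k P) (.req a k P')
  | inpCong (k x) : SCong P P' → SCong (.inp k x P) (.inp k x P')
  | outCong (k e) : SCong P P' → SCong (.out k e P) (.out k e P')
  | inSCong (k k') : SCong P P' → SCong (.inS k k' P) (.inS k k' P')
  | outSCong (k k') : SCong P P' → SCong (.outS k k' P) (.outS k k' P')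
  | branchCong (k) {n} {Ps Ps' : Fin n → Proc} :
      (∀ i, SCong (Ps i) (Ps' i)) → SCong (.branch k n Ps) (.branch k n Ps')
  | selCong (k j) : SCong P P' → SCong (.sel k j P) (.sel k j P')
  | condCong (e) : SCong P P' → SCong Q Q' →
      SCong (.cond e P Q) (.cond e P' Q')

/-- Reduction semantics. -/
inductive Red : Proc → Proc → Prop where
  | init (a k P Q) :
      Red (.par (.serv a k P) (.req a k Q)) (.nu k (.par P Q))
  | rinit (a k P Q) :
      Red (.par (.rserv a k P) (.req a k Q))
          (.par (.rserv a k P) (.nu k (.par P Q)))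
  | com (k x e P Q v) : e.eval = some v →
      Red (.par (.inp k x P) (.out k e Q)) (.par (P.substV x v) Q)
  | del (k k' P Q) :
      Red (.par (.inS k k' P) (.outS k k' Q)) (.par P Q)
  | sel {n} (k : ℕ) (Ps : Fin n → Proc) (j : ℕ) (h : j < n) (Q) :
      Red (.par (.branch k n Ps) (.sel k j Q)) (.par (Ps ⟨j, h⟩) Q)
  | ifT (e P Q) : e.eval = some (.vbool true) → Red (.cond e P Q) P
  | ifF (e P Q) : e.eval = some (.vbool false) → Red (.cond e P Q) Q
  | par (Q) : Red P P' → Red (.par P Q) (.par P' Q)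
  | res (k) : Red P P' → Red (.nu k P) (.nu k P')
  | str : SCong P Q → Red Q Q' → SCong Q' P' → Red P P'

/-- Entries of session environments: session types or `⊥`. -/
inductive TB : Type where
  | ty : SType → TB
  | bot : TB

/-- Service typings: partial maps from names/variables to sorts (payloads). -/
def PEnv : Type := ℕ → Option Payload

/-- Session typings: partial maps from session channels to types or `⊥`. -/
def SEnv : Type := ℕ → Option TB

/-- Typing of expressions. -/
inductive ETy : PEnv → Expr → Payload → Prop where
  | nat (Γ n) : ETy Γ (.lit (.vnat n)) .basicN
  | bool (Γ b) : ETy Γ (.lit (.vbool b)) .basicB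
  | name {Γ a α} : Γ a = some (.serv α) → ETy Γ (.lit (.vname a)) (.serv α)
  | evar {Γ x S} : Γ x = some S → ETy Γ (.evar x) S

/-- Duality check `Δ₁ ≍ Δ₂`: both environments may mention a channel only
with dual session types. -/
def Compat (Δ₁ Δ₂ : SEnv) : Prop :=
  ∀ k t₁ t₂, Δ₁ k = some t₁ → Δ₂ k = some t₂ →
    ∃ α, t₁ = TB.ty α ∧ t₂ = TB.ty α.dual

/-- Environment composition `Δ₁ ⊙ Δ₂`: channels occurring on both sides get
`⊥` (both endpoints have been found). -/
def comp (Δ₁ Δ₂ : SEnv) : SEnv := fun k =>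
  match Δ₁ k, Δ₂ k with
  | some _, some _ => some TB.bot
  | some t, none => some t
  | none, some t => some t
  | none, none => none

/-- The empty session environment. -/
def emptyS : SEnv := fun _ => none

/-- The session typing judgement `Γ ⊢ P ▷ Δ` with the modified service rule:
a service body is typed with session environment exactly `k : α`. -/
inductive Typed : PEnv → Proc → SEnv → Prop where
  | tServ {Γ a α k P} : Γ a = some (.serv α) →
      Typed Γ P (Function.update emptyS k (some (TB.ty α))) →
      Typed Γ (.serv a k P) emptyS
  | tRServ {Γ a α k P} : Γ a = some (.serv α) →
      Typed Γ P (Function.update emptyS k (some (TB.ty α))) →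
      Typed Γ (.rserv a k P) emptyS
  | tReq {Γ a α k P Δ} : Γ a = some (.serv α) → Δ k = none →
      Typed Γ P (Function.update Δ k (some (TB.ty α.dual))) →
      Typed Γ (.req a k P) Δ
  | tIn {Γ k x S α P Δ} : Δ k = none → (∀ β, S ≠ Payload.sess β) →
      Typed (Function.update Γ x (some S)) P
        (Function.update Δ k (some (TB.ty α))) →
      Typed Γ (.inp k x P) (Function.update Δ k (some (TB.ty (.recv S α))))
  | tOut {Γ k e S α P Δ} : Δ k = none → ETy Γ e S →
      (∀ β, S ≠ Payload.sess β) →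
      Typed Γ P (Function.update Δ k (some (TB.ty α))) →
      Typed Γ (.out k e P) (Function.update Δ k (some (TB.ty (.send S α))))
  | tInS {Γ k k' α β P Δ} : Δ k = none → Δ k' = none → k ≠ k' →
      Typed Γ P (Function.update (Function.update Δ k (some (TB.ty α))) k'
        (some (TB.ty β))) →
      Typed Γ (.inS k k' P)
        (Function.update Δ k (some (TB.ty (.recv (.sess β) α))))
  | tDel {Γ k k' α β P Δ} : Δ k = none → Δ k' = none → k ≠ k' →
      Typed Γ P (Function.update Δ k (some (TB.ty α))) →
      Typed Γ (.outS k k' P)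
        (Function.update (Function.update Δ k
          (some (TB.ty (.send (.sess β) α)))) k' (some (TB.ty β)))
  | tBra {Γ k n} {Ps : Fin n → Proc} {ts : Fin n → SType} {Δ} : Δ k = none →
      (∀ i, Typed Γ (Ps i) (Function.update Δ k (some (TB.ty (ts i))))) →
      Typed Γ (.branch k n Ps)
        (Function.update Δ k (some (TB.ty (.branch n ts))))
  | tSel {Γ k n j} {ts : Fin n → SType} {P Δ} : Δ k = none → (h : j < n) →
      Typed Γ P (Function.update Δ k (some (TB.ty (ts ⟨j, h⟩)))) →
      Typed Γ (.sel k j P)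
        (Function.update Δ k (some (TB.ty (.select n ts))))
  | tPar {Γ P₁ P₂ Δ₁ Δ₂} : Typed Γ P₁ Δ₁ → Typed Γ P₂ Δ₂ → Compat Δ₁ Δ₂ →
      Typed Γ (.par P₁ P₂) (comp Δ₁ Δ₂)
  | tInact {Γ Δ} : (∀ k t, Δ k = some t → t = TB.ty .done) →
      Typed Γ .nil Δ
  | tRes {Γ k P Δ} : Δ k = none →
      Typed Γ P (Function.update Δ k (some TB.bot)) →
      Typed Γ (.nu k P) Δ
  | tCond {Γ e P₁ P₂ Δ} : ETy Γ e .basicB → Typed Γ P₁ Δ → Typed Γ P₂ Δ →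
      Typed Γ (.cond e P₁ P₂) Δ
  | tBot {Γ P Δ k} : Typed Γ P (Function.update Δ k (some (TB.ty .done))) →
      Typed Γ P (Function.update Δ k (some TB.bot))

/-- `P` is well-typed. -/
def WellTyped (P : Proc) : Prop := ∃ Γ Δ, Typed Γ P Δ

/- Multigraphs, walks and acyclicity (cycles are closed walks without
repeated edges). -/
structure Multigraph (V E : Type) where
  ends : E → Sym2 V

inductive Multigraph.Walk {V E : Type} (G : Multigraph V E) : V → V → Type
  | nil (v : V) : Walk G v v
  | cons {u v w : V} (e : E) (h : G.ends e = s(u, v)) (p : Walk G v w) :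
      Walk G u w

def Multigraph.Walk.edges {V E : Type} {G : Multigraph V E} :
    {u v : V} → G.Walk u v → List E
  | _, _, .nil _ => []
  | _, _, .cons e _ p => e :: p.edges

def Multigraph.Acyclic {V E : Type} (G : Multigraph V E) : Prop :=
  ∀ (v : V) (w : G.Walk v v), w.edges.Nodup → w.edges = []

/-- Labelled graphs: nodes `0, …, n-1`, a multiset (list) of edges, and a
labelling of nodes by finite sets of session channels. -/
structure LGraph where
  n : ℕ
  edges : List (ℕ × ℕ)
  labels : ℕ → Finset ℕ

def LGraph.empty : LGraph := ⟨0, [], fun _ => ∅⟩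

def LGraph.single (s : Finset ℕ) : LGraph := ⟨1, [], fun _ => s⟩

/-- Erase a name from every label (used for restriction). -/
def LGraph.eraseL (k : ℕ) (G : LGraph) : LGraph :=
  ⟨G.n, G.edges, fun p => (G.labels p).erase k⟩

/-- Disjoint union of labelled graphs, adding one edge for each pair of
nodes `(p, q)` and each session channel in both their labels. -/
def LGraph.glue (G H : LGraph) : LGraph where
  n := G.n + H.n
  edges :=
    G.edges ++ H.edges.map (fun e => (G.n + e.1, G.n + e.2)) ++
      (List.range G.n).flatMap fun p =>
        (List.range H.n).flatMap fun q =>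
          List.replicate ((G.labels p ∩ H.labels q).card) (p, G.n + q)
  labels := fun p => if p < G.n then G.labels p else H.labels (p - G.n)

/-- The underlying multigraph of a labelled graph. -/
def LGraph.toMG (G : LGraph) : Multigraph ℕ (Fin G.edges.length) :=
  ⟨fun i => s((G.edges.get i).1, (G.edges.get i).2)⟩

def LGraph.Acyclic (G : LGraph) : Prop := G.toMG.Acyclic

/-- `k ⇝ k'` in `G`: some node labelled `k` has a path to some node
labelled `k'`. -/
def LGraph.Reaches (G : LGraph) (k k' : ℕ) : Prop :=
  ∃ p p', p < G.n ∧ p' < G.n ∧ k ∈ G.labels p ∧ k' ∈ G.labels p' ∧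
    Nonempty (G.toMG.Walk p p')

/-- The session dependency graph of a process: one node per thread, labelled
by its free session channels; one edge per shared session channel between
parallel threads; restriction erases labels. -/
def graphOf : Proc → LGraph
  | .nil => .empty
  | .par P Q => (graphOf P).glue (graphOf Q)
  | .nu k P => (graphOf P).eraseL k
  | P => .single (fsc P)

/-- Sub-term relation on processes. -/
inductive Subterm : Proc → Proc → Prop where
  | refl (P) : Subterm P P
  | parL : Subterm Q P₁ → Subterm Q (.par P₁ P₂)
  | parR : Subterm Q P₂ → Subterm Q (.par P₁ P₂)
  | nu (k) : Subterm Q P → Subterm Q (.nu k P)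
  | serv (a k) : Subterm Q P → Subterm Q (.serv a k P)
  | rserv (a k) : Subterm Q P → Subterm Q (.rserv a k P)
  | req (a k) : Subterm Q P → Subterm Q (.req a k P)
  | inp (k x) : Subterm Q P → Subterm Q (.inp k x P)
  | out (k e) : Subterm Q P → Subterm Q (.out k e P)
  | inS (k k') : Subterm Q P → Subterm Q (.inS k k' P)
  | outS (k k') : Subterm Q P → Subterm Q (.outS k k' P)
  | branch (k) {n} {Ps : Fin n → Proc} (i : Fin n) :
      Subterm Q (Ps i) → Subterm Q (.branch k n Ps)
  | sel (k j) : Subterm Q P → Subterm Q (.sel k j P)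
  | condT (e) : Subterm Q P₁ → Subterm Q (.cond e P₁ P₂)
  | condF (e) : Subterm Q P₂ → Subterm Q (.cond e P₁ P₂)

/-- `Q` is a sub-process of `P`: a sub-term of some `P' ≡ P`. -/
def SubProc (Q P : Proc) : Prop := ∃ P', SCong P P' ∧ Subterm Q P'

/-- A process is transparent iff every sub-process has an acyclic session
dependency graph. -/
def Transparent (P : Proc) : Prop := ∀ Q, SubProc Q P → (graphOf Q).Acyclic

/-- `P` contains no restriction. -/
def NoNu : Proc → Prop
  | .nil => True
  | .par P Q => NoNu P ∧ NoNu Q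
  | .nu _ _ => False
  | .serv _ _ P => NoNu P
  | .rserv _ _ P => NoNu P
  | .req _ _ P => NoNu P
  | .inp _ _ P => NoNu P
  | .out _ _ P => NoNu P
  | .inS _ _ P => NoNu P
  | .outS _ _ P => NoNu P
  | .branch _ n Ps => ∀ i : Fin n, NoNu (Ps i)
  | .sel _ _ P => NoNu P
  | .cond _ P Q => NoNu P ∧ NoNu Q

/-- A program: no free session channels, and no occurrence of session
restriction up to structural congruence. -/
def IsProgram (P : Proc) : Prop :=
  fsc P = ∅ ∧ ∃ P', SCong P P' ∧ NoNu P'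

/-- A process has no live session channels when all its session channels are
bound by a service or replicated-service prefix. -/
inductive NoLive : Proc → Prop where
  | nil : NoLive .nil
  | par {P Q} : NoLive P → NoLive Q → NoLive (.par P Q)
  | serv (a k P) : NoLive (.serv a k P)
  | rserv (a k P) : NoLive (.rserv a k P)
  | cond {e P Q} : NoLive P → NoLive Q → NoLive (.cond e P Q)

/-- `Q` is irreducible. -/
def Irred (Q : Proc) : Prop := ∀ R, ¬ Red Q R

/-- Reduction contexts `E ::= · | E|P | (νk)E`. -/
inductive Ctx : Type where
  | hole : Ctx
  | parC : Ctx → Proc → Ctx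
  | nuC : ℕ → Ctx → Ctx

def plug : Ctx → Proc → Proc
  | .hole, P => P
  | .parC E Q, P => .par (plug E P) Q
  | .nuC k E, P => .nu k (plug E P)

/-- One unfolding of the (coinductive) progress property. -/
def ProgressF (X : Proc → Prop) (P : Proc) : Prop :=
  ∀ P', Relation.ReflTransGen Red P P' →
    ∀ (E : Ctx) (P'' : Proc), SCong P' (plug E P'') → ¬ NoLive P'' →
      ∃ Q R, Irred Q ∧ WellTyped (.par P'' Q) ∧ Red (.par P'' Q) R ∧ X R

/-- Progress, as the greatest fixed point of `ProgressF`. -/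
def HasProgress (P : Proc) : Prop :=
  ∃ X : Proc → Prop, (∀ p, X p → ProgressF X p) ∧ X P

end Sess

namespace Sess


/-! ### Auxiliary development for Statement 9 -/

lemma fsc_subset_chans : ∀ P : Proc, fsc P ⊆ chans P := by
  intro P
  induction P with
  | nil => simp [fsc, chans]
  | par P Q ihP ihQ => exact Finset.union_subset_union ihP ihQ
  | nu k P ih =>
      exact (Finset.erase_subset _ _).trans (ih.trans (Finset.subset_insert _ _))
  | serv a k P ih =>
      exact (Finset.erase_subset _ _).trans (ih.trans (Finset.subset_insert _ _))
  | rserv a k P ih =>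
      exact (Finset.erase_subset _ _).trans (ih.trans (Finset.subset_insert _ _))
  | req a k P ih =>
      exact (Finset.erase_subset _ _).trans (ih.trans (Finset.subset_insert _ _))
  | inp k x P ih => exact Finset.insert_subset_insert _ ih
  | out k e P ih => exact Finset.insert_subset_insert _ ih
  | inS k k' P ih =>
      exact Finset.insert_subset_insert _
        ((Finset.erase_subset _ _).trans (ih.trans (Finset.subset_insert _ _)))
  | outS k k' P ih =>
      exact Finset.insert_subset_insert _ (Finset.insert_subset_insert _ ih)
  | branch k n Ps ih =>
      apply Finset.insert_subset_insert
      intro c hc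
      simp only [Finset.mem_biUnion] at hc ⊢
      obtain ⟨i, hi, hci⟩ := hc
      exact ⟨i, hi, ih i hci⟩
  | sel k j P ih => exact Finset.insert_subset_insert _ ih
  | cond e P Q ihP ihQ => exact Finset.union_subset_union ihP ihQ

lemma mem_image_iff_injOn {f : ℕ → ℕ} {s : Finset ℕ} {t : Set ℕ}
    (h : Set.InjOn f t) (hs : ↑s ⊆ t) {k : ℕ} (hk : k ∈ t) :
    f k ∈ s.image f ↔ k ∈ s := by
  constructor
  · rintro hm
    obtain ⟨a, ha, hfa⟩ := Finset.mem_image.mp hm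
    rwa [h (hs ha) hk hfa] at ha
  · intro hm; exact Finset.mem_image_of_mem f hm

lemma image_erase_injOn {f : ℕ → ℕ} {s : Finset ℕ} {t : Set ℕ}
    (h : Set.InjOn f t) (hs : ↑s ⊆ t) {k : ℕ} (hk : k ∈ t) :
    (s.erase k).image f = (s.image f).erase (f k) := by
  ext c
  simp only [Finset.mem_image, Finset.mem_erase]
  constructor
  · rintro ⟨a, ⟨hak, has⟩, rfl⟩
    refine ⟨fun hfa => hak (h (hs has) hk hfa), ⟨a, has, rfl⟩⟩
  · rintro ⟨hck, a, has, rfl⟩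
    exact ⟨a, ⟨fun h' => hck (by rw [h']), has⟩, rfl⟩

lemma fsc_srename {f : ℕ → ℕ} : ∀ {P : Proc}, Set.InjOn f ↑(chans P) →
    fsc (srename f P) = (fsc P).image f := by
  intro P
  induction P with
  | nil => intro _; simp [fsc, srename]
  | par P Q ihP ihQ =>
      intro h
      have hP := ihP (h.mono (by exact_mod_cast Finset.subset_union_left))
      have hQ := ihQ (h.mono (by exact_mod_cast Finset.subset_union_right))
      simp [fsc, srename, hP, hQ, Finset.image_union]
  | nu k P ih =>
      intro h
      have hsub : (↑(chans P) : Set ℕ) ⊆ ↑(chans (Proc.nu k P)) := by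
        exact_mod_cast Finset.subset_insert _ _
      have hP := ih (h.mono hsub)
      have hk : k ∈ (↑(chans (Proc.nu k P)) : Set ℕ) := by
        simp [chans]
      have hfs : (↑(fsc P) : Set ℕ) ⊆ (↑(chans P) : Set ℕ) ∪ {k} := by
        intro c hc
        exact Or.inl (by exact_mod_cast fsc_subset_chans P hc)
      simp only [fsc, srename, hP]
      refine (image_erase_injOn h ?_ hk).symm
      intro c hc
      exact_mod_cast Finset.mem_insert_of_mem (fsc_subset_chans P (by exact_mod_cast hc))
  | serv a k P ih =>
      intro h
      have hsub : (↑(chans P) : Set ℕ) ⊆ ↑(chans (Proc.serv a k P)) := by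
        exact_mod_cast Finset.subset_insert _ _
      have hP := ih (h.mono hsub)
      have hk : k ∈ (↑(chans (Proc.serv a k P)) : Set ℕ) := by simp [chans]
      have hfs : (↑(fsc P) : Set ℕ) ⊆ (↑(chans P) : Set ℕ) ∪ {k} := by
        intro c hc
        exact Or.inl (by exact_mod_cast fsc_subset_chans P hc)
      simp only [fsc, srename, hP]
      refine (image_erase_injOn h ?_ hk).symm
      intro c hc
      exact_mod_cast Finset.mem_insert_of_mem (fsc_subset_chans P (by exact_mod_cast hc))
  | rserv a k P ih =>
      intro h
      have hsub : (↑(chans P) : Set ℕ) ⊆ ↑(chans (Proc.rserv a k P)) := by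
        exact_mod_cast Finset.subset_insert _ _
      have hP := ih (h.mono hsub)
      have hk : k ∈ (↑(chans (Proc.rserv a k P)) : Set ℕ) := by simp [chans]
      have hfs : (↑(fsc P) : Set ℕ) ⊆ (↑(chans P) : Set ℕ) ∪ {k} := by
        intro c hc
        exact Or.inl (by exact_mod_cast fsc_subset_chans P hc)
      simp only [fsc, srename, hP]
      refine (image_erase_injOn h ?_ hk).symm
      intro c hc
      exact_mod_cast Finset.mem_insert_of_mem (fsc_subset_chans P (by exact_mod_cast hc))
  | req a k P ih =>
      intro h
      have hsub : (↑(chans P) : Set ℕ) ⊆ ↑(chans (Proc.req a k P)) := by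
        exact_mod_cast Finset.subset_insert _ _
      have hP := ih (h.mono hsub)
      have hk : k ∈ (↑(chans (Proc.req a k P)) : Set ℕ) := by simp [chans]
      have hfs : (↑(fsc P) : Set ℕ) ⊆ (↑(chans P) : Set ℕ) ∪ {k} := by
        intro c hc
        exact Or.inl (by exact_mod_cast fsc_subset_chans P hc)
      simp only [fsc, srename, hP]
      refine (image_erase_injOn h ?_ hk).symm
      intro c hc
      exact_mod_cast Finset.mem_insert_of_mem (fsc_subset_chans P (by exact_mod_cast hc))
  | inp k x P ih =>
      intro h
      have hP := ih (h.mono (by exact_mod_cast Finset.subset_insert _ _))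
      simp [fsc, srename, hP, Finset.image_insert]
  | out k e P ih =>
      intro h
      have hP := ih (h.mono (by exact_mod_cast Finset.subset_insert _ _))
      simp [fsc, srename, hP, Finset.image_insert]
  | inS k k' P ih =>
      intro h
      have hsub : (↑(chans P) : Set ℕ) ⊆ ↑(chans (Proc.inS k k' P)) := by
        intro c hc
        simp only [chans, Finset.coe_insert, Set.mem_insert_iff] at *
        tauto
      have hP := ih (h.mono hsub)
      have hk' : k' ∈ (↑(chans (Proc.inS k k' P)) : Set ℕ) := by simp [chans]
      have hfs : (↑(fsc P) : Set ℕ) ⊆ (↑(chans (Proc.inS k k' P)) : Set ℕ) := by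
        intro c hc
        have : c ∈ chans P := fsc_subset_chans P (by exact_mod_cast hc)
        simp only [chans, Finset.coe_insert, Set.mem_insert_iff, Finset.mem_coe]
        tauto
      have he := image_erase_injOn h hfs hk'
      simp only [fsc, srename, hP, Finset.image_insert, he]
  | outS k k' P ih =>
      intro h
      have hsub : (↑(chans P) : Set ℕ) ⊆ ↑(chans (Proc.outS k k' P)) := by
        intro c hc
        simp only [chans, Finset.coe_insert, Set.mem_insert_iff] at *
        tauto
      have hP := ih (h.mono hsub)
      simp [fsc, srename, hP, Finset.image_insert]
  | branch k n Ps ih =>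
      intro h
      have hP : ∀ i, fsc (srename f (Ps i)) = (fsc (Ps i)).image f := by
        intro i
        refine ih i (h.mono ?_)
        intro c hc
        simp only [chans, Finset.coe_insert, Set.mem_insert_iff,
          Finset.mem_coe, Finset.mem_biUnion]
        exact Or.inr ⟨i, Finset.mem_univ i, by exact_mod_cast hc⟩
      simp only [fsc, srename, Finset.image_insert, Finset.image_biUnion]
      congr 1
      ext c
      simp only [Finset.mem_biUnion, Finset.mem_image, Finset.mem_univ, true_and, hP]
      constructor
      · rintro ⟨i, a, ha, rfl⟩; exact ⟨a, ⟨i, ha⟩, rfl⟩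
      · rintro ⟨a, ⟨i, ha⟩, rfl⟩; exact ⟨i, a, ha, rfl⟩
  | sel k j P ih =>
      intro h
      have hP := ih (h.mono (by exact_mod_cast Finset.subset_insert _ _))
      simp [fsc, srename, hP, Finset.image_insert]
  | cond e P Q ihP ihQ =>
      intro h
      have hP := ihP (h.mono (by exact_mod_cast Finset.subset_union_left))
      have hQ := ihQ (h.mono (by exact_mod_cast Finset.subset_union_right))
      simp [fsc, srename, hP, hQ, Finset.image_union]


/-- No ν in `P` binds a channel free in its body. -/
def UN : Proc → Prop
  | .nil => True
  | .par P Q => UN P ∧ UN Q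
  | .nu k P => k ∉ fsc P ∧ UN P
  | .serv _ _ P => UN P
  | .rserv _ _ P => UN P
  | .req _ _ P => UN P
  | .inp _ _ P => UN P
  | .out _ _ P => UN P
  | .inS _ _ P => UN P
  | .outS _ _ P => UN P
  | .branch _ n Ps => ∀ i : Fin n, UN (Ps i)
  | .sel _ _ P => UN P
  | .cond _ P Q => UN P ∧ UN Q

/-- Parallel components everywhere in `P` have disjoint free session
channels. -/
def NE : Proc → Prop
  | .nil => True
  | .par P Q => NE P ∧ NE Q ∧ ∀ c ∈ fsc P, c ∉ fsc Q
  | .nu _ P => NE P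
  | .serv _ _ P => NE P
  | .rserv _ _ P => NE P
  | .req _ _ P => NE P
  | .inp _ _ P => NE P
  | .out _ _ P => NE P
  | .inS _ _ P => NE P
  | .outS _ _ P => NE P
  | .branch _ n Ps => ∀ i : Fin n, NE (Ps i)
  | .sel _ _ P => NE P
  | .cond _ P Q => NE P ∧ NE Q

lemma un_srename {f : ℕ → ℕ} : ∀ {P : Proc}, Set.InjOn f ↑(chans P) →
    (UN (srename f P) ↔ UN P) := by
  intro P
  induction P with
  | nil => intro _; simp [srename, UN]
  | par P Q ihP ihQ =>
      intro h
      have hP := ihP (h.mono (by exact_mod_cast Finset.subset_union_left))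
      have hQ := ihQ (h.mono (by exact_mod_cast Finset.subset_union_right))
      simp [srename, UN, hP, hQ]
  | nu k P ih =>
      intro h
      have hsub : Set.InjOn f ↑(chans P) :=
        h.mono (by exact_mod_cast Finset.subset_insert _ _)
      have hP := ih hsub
      have hfs := fsc_srename (P := P) hsub
      have hm : f k ∈ (fsc P).image f ↔ k ∈ fsc P := by
        refine mem_image_iff_injOn h ?_ (by simp [chans])
        intro c hc
        exact_mod_cast Finset.mem_insert_of_mem
          (fsc_subset_chans P (by exact_mod_cast hc))
      simp [srename, UN, hP, hfs, hm]
  | serv a k P ih =>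
      intro h
      exact ih (h.mono (by exact_mod_cast Finset.subset_insert _ _))
  | rserv a k P ih =>
      intro h
      exact ih (h.mono (by exact_mod_cast Finset.subset_insert _ _))
  | req a k P ih =>
      intro h
      exact ih (h.mono (by exact_mod_cast Finset.subset_insert _ _))
  | inp k x P ih =>
      intro h
      exact ih (h.mono (by exact_mod_cast Finset.subset_insert _ _))
  | out k e P ih =>
      intro h
      exact ih (h.mono (by exact_mod_cast Finset.subset_insert _ _))
  | inS k k' P ih =>
      intro h
      refine ih (h.mono ?_)
      intro c hc
      simp only [chans, Finset.coe_insert, Set.mem_insert_iff, Finset.mem_coe]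
      tauto
  | outS k k' P ih =>
      intro h
      refine ih (h.mono ?_)
      intro c hc
      simp only [chans, Finset.coe_insert, Set.mem_insert_iff, Finset.mem_coe]
      tauto
  | branch k n Ps ih =>
      intro h
      have hP : ∀ i, UN (srename f (Ps i)) ↔ UN (Ps i) := by
        intro i
        refine ih i (h.mono ?_)
        intro c hc
        simp only [chans, Finset.coe_insert, Set.mem_insert_iff,
          Finset.mem_coe, Finset.mem_biUnion]
        exact Or.inr ⟨i, Finset.mem_univ i, by exact_mod_cast hc⟩
      simp only [srename, UN]
      exact forall_congr' hP
  | sel k j P ih =>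
      intro h
      exact ih (h.mono (by exact_mod_cast Finset.subset_insert _ _))
  | cond e P Q ihP ihQ =>
      intro h
      have hP := ihP (h.mono (by exact_mod_cast Finset.subset_union_left))
      have hQ := ihQ (h.mono (by exact_mod_cast Finset.subset_union_right))
      simp [srename, UN, hP, hQ]

lemma ne_srename {f : ℕ → ℕ} : ∀ {P : Proc}, Set.InjOn f ↑(chans P) →
    (NE (srename f P) ↔ NE P) := by
  intro P
  induction P with
  | nil => intro _; simp [srename, NE]
  | par P Q ihP ihQ =>
      intro h
      have hiP : Set.InjOn f ↑(chans P) :=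
        h.mono (by exact_mod_cast Finset.subset_union_left)
      have hiQ : Set.InjOn f ↑(chans Q) :=
        h.mono (by exact_mod_cast Finset.subset_union_right)
      have hP := ihP hiP
      have hQ := ihQ hiQ
      have hfP := fsc_srename (P := P) hiP
      have hfQ := fsc_srename (P := Q) hiQ
      have hd : (∀ c ∈ (fsc P).image f, c ∉ (fsc Q).image f) ↔
          (∀ c ∈ fsc P, c ∉ fsc Q) := by
        constructor
        · intro hd c hcP hcQ
          exact hd (f c) (Finset.mem_image_of_mem f hcP)
            (Finset.mem_image_of_mem f hcQ)
        · rintro hd c hcP hcQ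
          obtain ⟨a, haP, rfl⟩ := Finset.mem_image.mp hcP
          obtain ⟨b, hbQ, hba⟩ := Finset.mem_image.mp hcQ
          have hab : b = a := h
            (by simp only [chans, Finset.coe_union, Set.mem_union, Finset.mem_coe];
                exact Or.inr (fsc_subset_chans Q hbQ))
            (by simp only [chans, Finset.coe_union, Set.mem_union, Finset.mem_coe];
                exact Or.inl (fsc_subset_chans P haP)) hba
          exact hd a haP (hab ▸ hbQ)
      simp only [srename, NE, hP, hQ, hfP, hfQ, hd]
  | nu k P ih =>
      intro h
      exact ih (h.mono (by exact_mod_cast Finset.subset_insert _ _))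
  | serv a k P ih =>
      intro h
      exact ih (h.mono (by exact_mod_cast Finset.subset_insert _ _))
  | rserv a k P ih =>
      intro h
      exact ih (h.mono (by exact_mod_cast Finset.subset_insert _ _))
  | req a k P ih =>
      intro h
      exact ih (h.mono (by exact_mod_cast Finset.subset_insert _ _))
  | inp k x P ih =>
      intro h
      exact ih (h.mono (by exact_mod_cast Finset.subset_insert _ _))
  | out k e P ih =>
      intro h
      exact ih (h.mono (by exact_mod_cast Finset.subset_insert _ _))
  | inS k k' P ih =>
      intro h
      refine ih (h.mono ?_)
      intro c hc
      simp only [chans, Finset.coe_insert, Set.mem_insert_iff, Finset.mem_coe]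
      tauto
  | outS k k' P ih =>
      intro h
      refine ih (h.mono ?_)
      intro c hc
      simp only [chans, Finset.coe_insert, Set.mem_insert_iff, Finset.mem_coe]
      tauto
  | branch k n Ps ih =>
      intro h
      have hP : ∀ i, NE (srename f (Ps i)) ↔ NE (Ps i) := by
        intro i
        refine ih i (h.mono ?_)
        intro c hc
        simp only [chans, Finset.coe_insert, Set.mem_insert_iff,
          Finset.mem_coe, Finset.mem_biUnion]
        exact Or.inr ⟨i, Finset.mem_univ i, by exact_mod_cast hc⟩
      simp only [srename, NE]
      exact forall_congr' hP
  | sel k j P ih =>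
      intro h
      exact ih (h.mono (by exact_mod_cast Finset.subset_insert _ _))
  | cond e P Q ihP ihQ =>
      intro h
      have hP := ihP (h.mono (by exact_mod_cast Finset.subset_union_left))
      have hQ := ihQ (h.mono (by exact_mod_cast Finset.subset_union_right))
      simp [srename, NE, hP, hQ]

lemma injOn_swap {k k' : ℕ} {s : Finset ℕ} (h : k' ∉ s) :
    Set.InjOn (fun c => if c = k then k' else c) ↑(insert k s) := by
  intro a ha b hb hab
  simp only [Finset.coe_insert, Set.mem_insert_iff, Finset.mem_coe] at ha hb
  dsimp only at hab
  by_cases hak : a = k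
  · by_cases hbk : b = k
    · rw [hak, hbk]
    · rw [if_pos hak, if_neg hbk] at hab
      rcases hb with rfl | hb
      · exact absurd rfl hbk
      · exact absurd (hab ▸ hb) h
  · by_cases hbk : b = k
    · rw [if_neg hak, if_pos hbk] at hab
      rcases ha with rfl | ha
      · exact absurd rfl hak
      · exact absurd (hab ▸ ha) h
    · rwa [if_neg hak, if_neg hbk] at hab

lemma injOn_swap_chans {P : Proc} {k k' : ℕ} (h : k' ∉ chans P) :
    Set.InjOn (fun c => if c = k then k' else c) ↑(chans P) :=
  (injOn_swap h).mono (by exact_mod_cast Finset.subset_insert _ _)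

lemma mem_image_swap {P : Proc} {k k' : ℕ} (h : k' ∉ chans P) :
    k' ∈ (fsc P).image (fun c => if c = k then k' else c) ↔ k ∈ fsc P := by
  simp only [Finset.mem_image]
  constructor
  · rintro ⟨a, ha, hfa⟩
    by_cases hak : a = k
    · exact hak ▸ ha
    · rw [if_neg hak] at hfa
      exact absurd (hfa ▸ fsc_subset_chans P ha) h
  · intro hk
    exact ⟨k, hk, if_pos rfl⟩

lemma erase_image_swap {P : Proc} {k k' : ℕ} (h : k' ∉ chans P) :
    ((fsc P).image (fun c => if c = k then k' else c)).erase k' =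
      (fsc P).erase k := by
  ext c
  simp only [Finset.mem_erase, Finset.mem_image]
  constructor
  · rintro ⟨hck, a, ha, hfa⟩
    by_cases hak : a = k
    · rw [if_pos hak] at hfa
      exact absurd hfa.symm hck
    · rw [if_neg hak] at hfa
      exact ⟨hfa ▸ hak, hfa ▸ ha⟩
  · rintro ⟨hck, hc⟩
    refine ⟨fun hh => h (hh ▸ fsc_subset_chans P hc), c, hc, if_neg hck⟩

lemma fsc_scong : ∀ {P Q : Proc}, SCong P Q → fsc P = fsc Q := by
  intro P Q h
  induction h with
  | refl P => rfl
  | symm _ ih => exact ih.symm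
  | trans _ _ ih1 ih2 => exact ih1.trans ih2
  | parComm P Q => simp [fsc, Finset.union_comm]
  | parAssoc P Q R => simp [fsc, Finset.union_assoc]
  | parNil P => simp [fsc]
  | nuNil k => simp [fsc]
  | scope P Q k hk =>
      ext c
      simp only [fsc, Finset.mem_union, Finset.mem_erase]
      constructor
      · rintro (h1 | ⟨hck, h2⟩)
        · exact ⟨fun hh => hk (hh ▸ h1), Or.inl h1⟩
        · exact ⟨hck, Or.inr h2⟩
      · rintro ⟨hck, h1 | h2⟩
        · exact Or.inl h1
        · exact Or.inr ⟨hck, h2⟩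
  | alpha P k k' hk' =>
      simp only [fsc]
      rw [fsc_srename (injOn_swap_chans hk'), erase_image_swap hk']
  | parCong _ _ ih1 ih2 => simp [fsc, ih1, ih2]
  | nuCong k _ ih => simp [fsc, ih]
  | servCong a k _ ih => simp [fsc, ih]
  | rservCong a k _ ih => simp [fsc, ih]
  | reqCong a k _ ih => simp [fsc, ih]
  | inpCong k x _ ih => simp [fsc, ih]
  | outCong k e _ ih => simp [fsc, ih]
  | inSCong k k' _ ih => simp [fsc, ih]
  | outSCong k k' _ ih => simp [fsc, ih]
  | branchCong k _ ih =>
      simp only [fsc]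
      congr 1
      exact Finset.biUnion_congr rfl (fun i _ => ih i)
  | selCong k j _ ih => simp [fsc, ih]
  | condCong e _ _ ih1 ih2 => simp [fsc, ih1, ih2]

lemma un_scong : ∀ {P Q : Proc}, SCong P Q → (UN P ↔ UN Q) := by
  intro P Q h
  induction h with
  | refl P => exact Iff.rfl
  | symm _ ih => exact ih.symm
  | trans _ _ ih1 ih2 => exact ih1.trans ih2
  | parComm P Q => simp only [UN]; exact and_comm
  | parAssoc P Q R => simp only [UN]; tauto
  | parNil P => simp [UN]
  | nuNil k => simp [UN, fsc]
  | scope P Q k hk =>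
      simp only [UN, fsc, Finset.mem_union]
      constructor
      · rintro ⟨hP, hkQ, hQ⟩
        exact ⟨by tauto, hP, hQ⟩
      · rintro ⟨hkPQ, hP, hQ⟩
        exact ⟨hP, by tauto, hQ⟩
  | alpha P k k' hk' =>
      simp only [UN]
      rw [un_srename (injOn_swap_chans hk'), fsc_srename (injOn_swap_chans hk'),
        mem_image_swap hk']
  | parCong _ _ ih1 ih2 => simp only [UN]; rw [ih1, ih2]
  | nuCong k h ih => simp only [UN]; rw [ih, fsc_scong h]
  | servCong a k _ ih => exact ih
  | rservCong a k _ ih => exact ih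
  | reqCong a k _ ih => exact ih
  | inpCong k x _ ih => exact ih
  | outCong k e _ ih => exact ih
  | inSCong k k' _ ih => exact ih
  | outSCong k k' _ ih => exact ih
  | branchCong k _ ih => simp only [UN]; exact forall_congr' ih
  | selCong k j _ ih => exact ih
  | condCong e _ _ ih1 ih2 => simp only [UN]; rw [ih1, ih2]

lemma ne_scong : ∀ {P Q : Proc}, SCong P Q → (NE P ↔ NE Q) := by
  intro P Q h
  induction h with
  | refl P => exact Iff.rfl
  | symm _ ih => exact ih.symm
  | trans _ _ ih1 ih2 => exact ih1.trans ih2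
  | parComm P Q =>
      simp only [NE]
      constructor
      · rintro ⟨h1, h2, h3⟩
        exact ⟨h2, h1, fun c hc hc' => h3 c hc' hc⟩
      · rintro ⟨h1, h2, h3⟩
        exact ⟨h2, h1, fun c hc hc' => h3 c hc' hc⟩
  | parAssoc P Q R =>
      simp only [NE, fsc, Finset.mem_union]
      constructor
      · rintro ⟨hP, ⟨hQ, hR, hQR⟩, hPQR⟩
        refine ⟨⟨hP, hQ, fun c hc hc' => hPQR c hc (Or.inl hc')⟩, hR, ?_⟩
        rintro c (hc | hc)
        · exact fun hr => hPQR c hc (Or.inr hr)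
        · exact hQR c hc
      · rintro ⟨⟨hP, hQ, hPQ⟩, hR, hPQR⟩
        refine ⟨hP, ⟨hQ, hR, fun c hc => hPQR c (Or.inr hc)⟩, ?_⟩
        rintro c hc (hq | hr)
        · exact hPQ c hc hq
        · exact hPQR c (Or.inl hc) hr
  | parNil P => simp [NE, fsc]
  | nuNil k => simp [NE]
  | scope P Q k hk =>
      simp only [NE]
      constructor
      · rintro ⟨hP, hQ, hd⟩
        refine ⟨hP, hQ, fun c hc hc' => ?_⟩
        have hck : c ≠ k := fun hh => hk (hh ▸ hc)
        exact hd c hc (by simp only [fsc, Finset.mem_erase]; exact ⟨hck, hc'⟩)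
      · rintro ⟨hP, hQ, hd⟩
        refine ⟨hP, hQ, fun c hc hc' => ?_⟩
        simp only [fsc, Finset.mem_erase] at hc'
        exact hd c hc hc'.2
  | alpha P k k' hk' =>
      simp only [NE]
      rw [ne_srename (injOn_swap_chans hk')]
  | parCong h1 h2 ih1 ih2 =>
      simp only [NE]
      rw [ih1, ih2, fsc_scong h1, fsc_scong h2]
  | nuCong k h ih => exact ih
  | servCong a k _ ih => exact ih
  | rservCong a k _ ih => exact ih
  | reqCong a k _ ih => exact ih
  | inpCong k x _ ih => exact ih
  | outCong k e _ ih => exact ih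
  | inSCong k k' _ ih => exact ih
  | outSCong k k' _ ih => exact ih
  | branchCong k _ ih => simp only [NE]; exact forall_congr' ih
  | selCong k j _ ih => exact ih
  | condCong e _ _ ih1 ih2 => simp only [NE]; rw [ih1, ih2]

lemma nonu_un : ∀ {P : Proc}, NoNu P → UN P := by
  intro P
  induction P with
  | nil => exact fun _ => trivial
  | par P Q ihP ihQ => exact fun h => ⟨ihP h.1, ihQ h.2⟩
  | nu k P ih => exact fun h => absurd h id
  | serv a k P ih => exact ih
  | rserv a k P ih => exact ih
  | req a k P ih => exact ih
  | inp k x P ih => exact ih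
  | out k e P ih => exact ih
  | inS k k' P ih => exact ih
  | outS k k' P ih => exact ih
  | branch k n Ps ih => exact fun h i => ih i (h i)
  | sel k j P ih => exact ih
  | cond e P Q ihP ihQ => exact fun h => ⟨ihP h.1, ihQ h.2⟩

lemma typed_dom : ∀ {Γ P Δ}, Typed Γ P Δ → ∀ c ∈ fsc P, Δ c ≠ none := by
  intro Γ P Δ h
  induction h with
  | tServ ha hP ih =>
      intro c hc
      simp only [fsc, Finset.mem_erase] at hc
      have := ih c hc.2
      unfold emptyS at this
      rw [Function.update_apply, if_neg hc.1] at this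
      exact absurd rfl this
  | tRServ ha hP ih =>
      intro c hc
      simp only [fsc, Finset.mem_erase] at hc
      have := ih c hc.2
      unfold emptyS at this
      rw [Function.update_apply, if_neg hc.1] at this
      exact absurd rfl this
  | tReq ha hk hP ih =>
      intro c hc
      simp only [fsc, Finset.mem_erase] at hc
      have := ih c hc.2
      rwa [Function.update_apply, if_neg hc.1] at this
  | tIn hk hS hP ih =>
      intro c hc
      rw [Function.update_apply]
      split
      · simp
      · next hck =>
          simp only [fsc, Finset.mem_insert] at hc
          rcases hc with rfl | hc
          · exact absurd rfl hck
          · have := ih c hc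
            rwa [Function.update_apply, if_neg hck] at this
  | tOut hk he hS hP ih =>
      intro c hc
      rw [Function.update_apply]
      split
      · simp
      · next hck =>
          simp only [fsc, Finset.mem_insert] at hc
          rcases hc with rfl | hc
          · exact absurd rfl hck
          · have := ih c hc
            rwa [Function.update_apply, if_neg hck] at this
  | tInS hk hk' hkk' hP ih =>
      intro c hc
      rw [Function.update_apply]
      split
      · simp
      · next hck =>
          simp only [fsc, Finset.mem_insert, Finset.mem_erase] at hc
          rcases hc with rfl | ⟨hck', hc⟩
          · exact absurd rfl hck
          · have := ih c hc
            rwa [Function.update_apply, if_neg hck', Function.update_apply,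
              if_neg hck] at this
  | tDel hk hk' hkk' hP ih =>
      intro c hc
      rw [Function.update_apply]
      split
      · simp
      · next hck' =>
          rw [Function.update_apply]
          split
          · simp
          · next hck =>
              simp only [fsc, Finset.mem_insert] at hc
              rcases hc with rfl | rfl | hc
              · exact absurd rfl hck
              · exact absurd rfl hck'
              · have := ih c hc
                rwa [Function.update_apply, if_neg hck] at this
  | tBra hk hPs ih =>
      intro c hc
      rw [Function.update_apply]
      split
      · simp
      · next hck =>
          simp only [fsc, Finset.mem_insert, Finset.mem_biUnion] at hc
          rcases hc with rfl | ⟨i, _, hc⟩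
          · exact absurd rfl hck
          · have := ih i c hc
            rwa [Function.update_apply, if_neg hck] at this
  | tSel hk hj hP ih =>
      intro c hc
      rw [Function.update_apply]
      split
      · simp
      · next hck =>
          simp only [fsc, Finset.mem_insert] at hc
          rcases hc with rfl | hc
          · exact absurd rfl hck
          · have := ih c hc
            rwa [Function.update_apply, if_neg hck] at this
  | tPar h1 h2 hcpt ih1 ih2 =>
      intro c hc
      simp only [fsc, Finset.mem_union] at hc
      simp only [comp]
      split <;> simp_all
      rcases hc with hc | hc
      · exact ih1 c hc (by assumption)
      · exact ih2 c hc (by assumption)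
  | tInact hΔ => intro c hc; simp [fsc] at hc
  | tRes hk hP ih =>
      intro c hc
      simp only [fsc, Finset.mem_erase] at hc
      have := ih c hc.2
      rwa [Function.update_apply, if_neg hc.1] at this
  | tCond he h1 h2 ih1 ih2 =>
      intro c hc
      simp only [fsc, Finset.mem_union] at hc
      rcases hc with hc | hc
      · exact ih1 c hc
      · exact ih2 c hc
  | tBot hP ih =>
      intro c hc
      have := ih c hc
      rw [Function.update_apply] at this ⊢
      split
      · simp
      · next hck => rwa [if_neg hck] at this

lemma typed_ne : ∀ {Γ P Δ}, Typed Γ P Δ → UN P →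
    (∀ c ∈ fsc P, Δ c ≠ some TB.bot) → NE P := by
  intro Γ P Δ h
  induction h with
  | tServ ha hP ih =>
      intro hun hb
      simp only [UN] at hun
      simp only [NE]
      refine ih hun ?_
      intro c hc
      unfold emptyS
      rw [Function.update_apply]
      split
      · simp
      · simp [emptyS]
  | tRServ ha hP ih =>
      intro hun hb
      simp only [UN] at hun
      simp only [NE]
      refine ih hun ?_
      intro c hc
      unfold emptyS
      rw [Function.update_apply]
      split
      · simp
      · simp [emptyS]
  | tReq ha hk hP ih =>
      intro hun hb
      simp only [UN] at hun
      simp only [NE]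
      refine ih hun ?_
      intro c hc
      rw [Function.update_apply]
      split
      · simp
      · next hck =>
          exact hb c (by simp only [fsc, Finset.mem_erase]; exact ⟨hck, hc⟩)
  | tIn hk hS hP ih =>
      intro hun hb
      simp only [UN] at hun
      simp only [NE]
      refine ih hun ?_
      intro c hc
      rw [Function.update_apply]
      split
      · simp
      · next hck =>
          have := hb c (by simp only [fsc, Finset.mem_insert]; exact Or.inr hc)
          rwa [Function.update_apply, if_neg hck] at this
  | tOut hk he hS hP ih =>
      intro hun hb
      simp only [UN] at hun
      simp only [NE]
      refine ih hun ?_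
      intro c hc
      rw [Function.update_apply]
      split
      · simp
      · next hck =>
          have := hb c (by simp only [fsc, Finset.mem_insert]; exact Or.inr hc)
          rwa [Function.update_apply, if_neg hck] at this
  | tInS hk hk' hkk' hP ih =>
      intro hun hb
      simp only [UN] at hun
      simp only [NE]
      refine ih hun ?_
      intro c hc
      rw [Function.update_apply]
      split
      · simp
      · next hck' =>
          rw [Function.update_apply]
          split
          · simp
          · next hck =>
              have := hb c (by
                simp only [fsc, Finset.mem_insert, Finset.mem_erase]
                exact Or.inr ⟨hck', hc⟩)
              rwa [Function.update_apply, if_neg hck] at this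
  | tDel hk hk' hkk' hP ih =>
      rename_i Γ' k k' α β P' Δ'
      intro hun hb
      simp only [UN] at hun
      simp only [NE]
      refine ih hun ?_
      intro c hc
      rw [Function.update_apply]
      split
      · simp
      · next hck =>
          have := hb c (by
            simp only [fsc, Finset.mem_insert]
            exact Or.inr (Or.inr hc))
          rw [Function.update_apply] at this
          split at this
          · next hck'2 => rw [hck'2, hk']; simp
          · rwa [Function.update_apply, if_neg hck] at this
  | tBra hk hPs ih =>
      intro hun hb
      simp only [UN] at hun
      simp only [NE]
      intro i
      refine ih i (hun i) ?_
      intro c hc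
      rw [Function.update_apply]
      split
      · simp
      · next hck =>
          have := hb c (by
            simp only [fsc, Finset.mem_insert, Finset.mem_biUnion]
            exact Or.inr ⟨i, Finset.mem_univ i, hc⟩)
          rwa [Function.update_apply, if_neg hck] at this
  | tSel hk hj hP ih =>
      intro hun hb
      simp only [UN] at hun
      simp only [NE]
      refine ih hun ?_
      intro c hc
      rw [Function.update_apply]
      split
      · simp
      · next hck =>
          have := hb c (by simp only [fsc, Finset.mem_insert]; exact Or.inr hc)
          rwa [Function.update_apply, if_neg hck] at this
  | tPar h1 h2 hcpt ih1 ih2 =>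
      rename_i Γ' P₁ P₂ Δ₁ Δ₂
      intro hun hb
      simp only [UN] at hun
      simp only [NE]
      obtain ⟨hu1, hu2⟩ := hun
      refine ⟨ih1 hu1 ?_, ih2 hu2 ?_, ?_⟩
      · intro c hc
        obtain ⟨t₁, ht₁⟩ := Option.ne_none_iff_exists'.mp (typed_dom h1 c hc)
        cases h2c : Δ₂ c with
        | none =>
            have := hb c (by simp only [fsc, Finset.mem_union]; exact Or.inl hc)
            simp only [comp, ht₁, h2c] at this
            rw [ht₁]
            simpa using this
        | some t₂ =>
            obtain ⟨α, hα, _⟩ := hcpt c t₁ t₂ ht₁ h2c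
            rw [ht₁, hα]
            simp
      · intro c hc
        obtain ⟨t₂, ht₂⟩ := Option.ne_none_iff_exists'.mp (typed_dom h2 c hc)
        cases h1c : Δ₁ c with
        | none =>
            have := hb c (by simp only [fsc, Finset.mem_union]; exact Or.inr hc)
            simp only [comp, ht₂, h1c] at this
            rw [ht₂]
            simpa using this
        | some t₁ =>
            obtain ⟨α, _, hα⟩ := hcpt c t₁ t₂ h1c ht₂
            rw [ht₂, hα]
            simp
      · intro c hc1 hc2
        obtain ⟨t₁, ht₁⟩ := Option.ne_none_iff_exists'.mp (typed_dom h1 c hc1)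
        obtain ⟨t₂, ht₂⟩ := Option.ne_none_iff_exists'.mp (typed_dom h2 c hc2)
        have := hb c (by simp only [fsc, Finset.mem_union]; exact Or.inl hc1)
        simp only [comp, ht₁, ht₂] at this
        exact this rfl
  | tInact hΔ =>
      intro _ _
      simp only [NE]
  | tRes hk hP ih =>
      intro hun hb
      simp only [UN] at hun
      simp only [NE]
      obtain ⟨hkf, hu⟩ := hun
      refine ih hu ?_
      intro c hc
      rw [Function.update_apply]
      split
      · next hck => exact absurd (hck ▸ hc) hkf
      · next hck =>
          exact hb c (by simp only [fsc, Finset.mem_erase]; exact ⟨hck, hc⟩)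
  | tCond he h1 h2 ih1 ih2 =>
      intro hun hb
      simp only [UN] at hun
      simp only [NE]
      refine ⟨ih1 hun.1 ?_, ih2 hun.2 ?_⟩
      · intro c hc
        exact hb c (by simp only [fsc, Finset.mem_union]; exact Or.inl hc)
      · intro c hc
        exact hb c (by simp only [fsc, Finset.mem_union]; exact Or.inr hc)
  | tBot hP ih =>
      intro hun hb
      refine ih hun ?_
      intro c hc
      have := hb c hc
      rw [Function.update_apply] at this ⊢
      split
      · simp
      · next hck => rwa [if_neg hck] at this

lemma graphOf_labels_subset : ∀ (P : Proc) (p : ℕ),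
    (graphOf P).labels p ⊆ fsc P := by
  intro P
  induction P with
  | par P Q ihP ihQ =>
      intro p c hc
      have hc' : c ∈ (if p < (graphOf P).n then (graphOf P).labels p
          else (graphOf Q).labels (p - (graphOf P).n)) := hc
      simp only [fsc, Finset.mem_union]
      split at hc'
      · exact Or.inl (ihP _ hc')
      · exact Or.inr (ihQ _ hc')
  | nu k P ih =>
      intro p c hc
      have hc' : c ∈ ((graphOf P).labels p).erase k := hc
      rw [Finset.mem_erase] at hc'
      exact Finset.mem_erase.mpr ⟨hc'.1, ih _ hc'.2⟩
  | nil => exact fun p c hc => hc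
  | serv a k P ih => exact fun p c hc => hc
  | rserv a k P ih => exact fun p c hc => hc
  | req a k P ih => exact fun p c hc => hc
  | inp k x P ih => exact fun p c hc => hc
  | out k e P ih => exact fun p c hc => hc
  | inS k k' P ih => exact fun p c hc => hc
  | outS k k' P ih => exact fun p c hc => hc
  | branch k n Ps ih => exact fun p c hc => hc
  | sel k j P ih => exact fun p c hc => hc
  | cond e P Q ihP ihQ => exact fun p c hc => hc

lemma ne_edges : ∀ {P : Proc}, NE P → (graphOf P).edges = [] := by
  intro P
  induction P with
  | par P Q ihP ihQ =>
      intro h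
      simp only [NE] at h
      obtain ⟨h1, h2, hd⟩ := h
      show ((graphOf P).glue (graphOf Q)).edges = []
      simp only [LGraph.glue, ihP h1, ihQ h2, List.map_nil, List.nil_append]
      refine List.eq_nil_iff_forall_not_mem.mpr ?_
      intro e he
      simp only [List.mem_flatMap, List.mem_range, List.mem_replicate] at he
      obtain ⟨p, hp, q, hq, hcard, _⟩ := he
      obtain ⟨c, hc⟩ := Finset.card_ne_zero.mp hcard
      rw [Finset.mem_inter] at hc
      exact hd c (graphOf_labels_subset P p hc.1) (graphOf_labels_subset Q q hc.2)
  | nu k P ih => exact fun h => ih h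
  | nil => exact fun _ => rfl
  | serv a k P ih => exact fun _ => rfl
  | rserv a k P ih => exact fun _ => rfl
  | req a k P ih => exact fun _ => rfl
  | inp k x P ih => exact fun _ => rfl
  | out k e P ih => exact fun _ => rfl
  | inS k k' P ih => exact fun _ => rfl
  | outS k k' P ih => exact fun _ => rfl
  | branch k n Ps ih => exact fun _ => rfl
  | sel k j P ih => exact fun _ => rfl
  | cond e P Q ihP ihQ => exact fun _ => rfl

lemma acyclic_of_edges_nil {G : LGraph} (h : G.edges = []) : G.Acyclic := by
  intro v w _
  cases w with
  | nil => rfl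
  | cons e he p =>
      have hlen : G.edges.length = 0 := by rw [h]; rfl
      have := e.isLt
      omega

lemma ne_subterm : ∀ {Q P : Proc}, Subterm Q P → NE P → NE Q := by
  intro Q P h
  induction h with
  | refl => exact id
  | parL _ ih => intro h; simp only [NE] at h; exact ih h.1
  | parR _ ih => intro h; simp only [NE] at h; exact ih h.2.1
  | nu k _ ih => intro h; simp only [NE] at h; exact ih h
  | serv a k _ ih => intro h; simp only [NE] at h; exact ih h
  | rserv a k _ ih => intro h; simp only [NE] at h; exact ih h
  | req a k _ ih => intro h; simp only [NE] at h; exact ih h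
  | inp k x _ ih => intro h; simp only [NE] at h; exact ih h
  | out k e _ ih => intro h; simp only [NE] at h; exact ih h
  | inS k k' _ ih => intro h; simp only [NE] at h; exact ih h
  | outS k k' _ ih => intro h; simp only [NE] at h; exact ih h
  | branch k i _ ih => intro h; simp only [NE] at h; exact ih (h i)
  | sel k j _ ih => intro h; simp only [NE] at h; exact ih h
  | condT e _ ih => intro h; simp only [NE] at h; exact ih h.1
  | condF e _ ih => intro h; simp only [NE] at h; exact ih h.2

/-- every sub-process of a well-typed program has an edge-free
session dependency graph; in particular every well-typed program is
transparent. -/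
theorem program_subproc_no_edges {P : Proc} (hprog : IsProgram P)
    (hwt : WellTyped P) :
    (∀ Q, SubProc Q P → (graphOf Q).edges = []) ∧ Transparent P := by
  obtain ⟨hfsc, P', hc, hnn⟩ := hprog
  obtain ⟨Γ, Δ, hty⟩ := hwt
  have hunP : UN P := (un_scong hc).mpr (nonu_un hnn)
  have hneP : NE P := typed_ne hty hunP (by
    intro c hcc
    rw [hfsc] at hcc
    simp at hcc)
  have key : ∀ Q, SubProc Q P → (graphOf Q).edges = [] := by
    rintro Q ⟨P'', hc'', hsub⟩
    exact ne_edges (ne_subterm hsub ((ne_scong hc'').mp hneP))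
  exact ⟨key, fun Q hQ => acyclic_of_edges_nil (key Q hQ)⟩

end Sess
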